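/- For a, b ∈ Dⁿ, the probability distribution assigning mass 1/2 to a∧₀b, α/2 to a∨₀b, and (1-α)/2 to a∨₁b (with coinciding points accumulating their masses) has marginal (a+b)/2; consequently, if these three points form a chain, the Lovász extension satisfies f^L((a+b)/2) = ½ f(a∧₀b) + (α/2) f(a∨₀b) + ((1-α)/2) f(a∨₁b). -/

import Mathlib

open Finset

/-- The three-element domain `D = {-α, 0, 1}`, abstractly. -/
inductive D3 : Type
  | neg : D3
  | zero : D3
  | one : D3
deriving DecidableEq

instance : Fintype D3 :=
  ⟨{D3.neg, D3.zero, D3.one}, by rintro (_ | _ | _) <;> simp⟩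

namespace D3

/-- The embedding of `D3` into `ℝ` sending `neg ↦ -α`, `zero ↦ 0`, `one ↦ 1`. -/
def emb (α : ℝ) : D3 → ℝ
  | neg => -α
  | zero => 0
  | one => 1

/-- The partial order `0 ≺ 1`, `0 ≺ -α`, with `1` and `-α` incomparable. -/
instance : PartialOrder D3 where
  le x y := x = y ∨ x = zero
  le_refl x := Or.inl rfl
  le_trans x y z hxy hyz := by
    rcases hxy with rfl | rfl
    · exact hyz
    · exact Or.inr rfl
  le_antisymm x y hxy hyx := by
    rcases hxy with rfl | rfl
    · rfl
    · rcases hyx with rfl | rfl <;> rfl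

/-- `∧₀` : `1 ∧₀ (-α) = (-α) ∧₀ 1 = 0`, and min w.r.t. `≺` otherwise. -/
def meet0 (x y : D3) : D3 := if x = y then x else zero

/-- `∨₀` : `1 ∨₀ (-α) = (-α) ∨₀ 1 = 0`, and max w.r.t. `≺` otherwise. -/
def join0 (x y : D3) : D3 :=
  if x = y then x else if x = zero then y else if y = zero then x else zero

/-- `∨₁` : `1 ∨₁ (-α) = (-α) ∨₁ 1 = 1`, and max w.r.t. `≺` otherwise. -/
def join1 (x y : D3) : D3 :=
  if x = y then x else if x = zero then y else if y = zero then x else one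

end D3

/-- Componentwise `∧₀` on `Dⁿ`. -/
def vmeet0 {n : ℕ} (a b : Fin n → D3) : Fin n → D3 := fun i => D3.meet0 (a i) (b i)

/-- Componentwise `∨₀` on `Dⁿ`. -/
def vjoin0 {n : ℕ} (a b : Fin n → D3) : Fin n → D3 := fun i => D3.join0 (a i) (b i)

/-- Componentwise `∨₁` on `Dⁿ`. -/
def vjoin1 {n : ℕ} (a b : Fin n → D3) : Fin n → D3 := fun i => D3.join1 (a i) (b i)

/-- `lam` is a probability distribution on `Dⁿ`. -/
def IsDist (n : ℕ) (lam : (Fin n → D3) → ℝ) : Prop :=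
  (∀ a, 0 ≤ lam a ∧ lam a ≤ 1) ∧ ∑ a : Fin n → D3, lam a = 1

/-- `lam` has marginal vector `x`, i.e. `Σ_a lam(a)·a = x` in `ℝⁿ`. -/
def HasMarginal (α : ℝ) (n : ℕ) (lam : (Fin n → D3) → ℝ) (x : Fin n → ℝ) : Prop :=
  ∀ i, ∑ a : Fin n → D3, lam a * D3.emb α (a i) = x i

/-- The support of `lam` forms a chain w.r.t. the componentwise order on `Dⁿ`. -/
def ChainSupp (n : ℕ) (lam : (Fin n → D3) → ℝ) : Prop :=
  ∀ a b : Fin n → D3, lam a ≠ 0 → lam b ≠ 0 → a ≤ b ∨ b ≤ a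

/-- The box `[-α,1]ⁿ`. -/
def Box (α : ℝ) (n : ℕ) : Set (Fin n → ℝ) := {x | ∀ i, x i ∈ Set.Icc (-α) 1}

/-- `f : Dⁿ → ℝ` is α-bisubmodular. -/
def AlphaBisub (α : ℝ) (n : ℕ) (f : (Fin n → D3) → ℝ) : Prop :=
  ∀ a b : Fin n → D3,
    f (vmeet0 a b) + α * f (vjoin0 a b) + (1 - α) * f (vjoin1 a b) ≤ f a + f b

/-- Number of zero coordinates. -/
def zc {n : ℕ} (c : Fin n → D3) : ℕ := (Finset.univ.filter fun i => c i = D3.zero).card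

/-- The convex closure `f⁻(x)`. -/
noncomputable def cClos (α : ℝ) (n : ℕ) (f : (Fin n → D3) → ℝ) (x : Fin n → ℝ) : ℝ :=
  sInf {y | ∃ lam, IsDist n lam ∧ HasMarginal α n lam x ∧ y = ∑ a : Fin n → D3, lam a * f a}

/-!
A chain-supported measure on `Dⁿ` is determined by its marginal. Indeed, on a chain the sets
`{c | c i = v}` (`v ≠ 0`) are nested, so at each coordinate the chain never charges both `1`
and `-α`, and the marginal `x i = λ{c i = 1} - α λ{c i = -α}` (with `α > 0`) gives both masses.
Nestedness also makes the mass of every principal up-set `{d | c ≤ d}` equal to that of its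
lightest defining set `{d | d i = c i}`, and Möbius inversion, by induction on the number of zero
coordinates, recovers `λ c` from these up-set masses. The three-point distribution
`½ δ(a ∧₀ b) + (α/2) δ(a ∨₀ b) + ((1-α)/2) δ(a ∨₁ b)` has marginal `(a+b)/2` by a coordinatewise
check, so when it is a chain it is the only chain-supported distribution with that marginal.
-/

namespace D3

instance : DecidableLE D3 := fun x y => inferInstanceAs (Decidable (x = y ∨ x = zero))

theorem emb_meet0_add_emb_join0_add_emb_join1 (α : ℝ) (x y : D3) :
    1 / 2 * emb α (meet0 x y) + α / 2 * emb α (join0 x y) + (1 - α) / 2 * emb α (join1 x y)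
      = (emb α x + emb α y) / 2 := by
  cases x <;> cases y <;> simp [meet0, join0, join1, emb] <;> ring

end D3

instance {n : ℕ} : DecidableLE (Fin n → D3) := fun c d =>
  inferInstanceAs (Decidable (∀ i, c i ≤ d i))

theorem Finset.sum_le_sum_of_ne_zero_of_nonneg {ι M : Type*} [AddCommMonoid M] [PartialOrder M]
    [IsOrderedAddMonoid M] {f : ι → M} {s t : Finset ι} (hf : ∀ i, 0 ≤ f i)
    (h : ∀ i ∈ s, f i ≠ 0 → i ∈ t) : ∑ i ∈ s, f i ≤ ∑ i ∈ t, f i := by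
  classical
  rw [← Finset.sum_filter_ne_zero]
  refine Finset.sum_le_sum_of_subset_of_nonneg (fun i hi => ?_) fun i _ _ => hf i
  exact h i (mem_filter.1 hi).1 (mem_filter.1 hi).2

theorem zc_lt_zc_of_lt {n : ℕ} {c d : Fin n → D3} (h : c < d) : zc d < zc c := by
  obtain ⟨hle, i, hi⟩ := Pi.lt_def.1 h
  have hci : c i = .zero := (hle i).resolve_left hi.ne
  refine card_lt_card ((ssubset_iff_of_subset fun j hj => ?_).2 ?_)
  · exact mem_filter.2 ⟨mem_univ j, (hle j).elim (·.trans (mem_filter.1 hj).2) id⟩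
  · exact ⟨i, mem_filter.2 ⟨mem_univ i, hci⟩, fun h => hi.ne (hci.trans (mem_filter.1 h).2.symm)⟩

section ChainSupported

variable {n : ℕ} {lam μ : (Fin n → D3) → ℝ}

noncomputable def coordMass (lam : (Fin n → D3) → ℝ) (i : Fin n) (v : D3) : ℝ :=
  ∑ c ∈ univ.filter (fun c => c i = v), lam c

/-- On a chain the sets `{c | c i = v}`, `v ≠ 0`, are nested, so their masses order them. -/
theorem apply_eq_of_coordMass_le (h0 : ∀ c, 0 ≤ lam c) (hchain : ChainSupp n lam)
    {i j : Fin n} {v w : D3} (hv : v ≠ .zero) (hw : w ≠ .zero)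
    (hle : coordMass lam i v ≤ coordMass lam j w) {c : Fin n → D3} (hc : lam c ≠ 0)
    (hci : c i = v) : c j = w := by
  by_contra hcj
  have hsub : coordMass lam j w ≤ ∑ d ∈ (univ.filter (fun d => d i = v)).erase c, lam d := by
    refine sum_le_sum_of_ne_zero_of_nonneg h0 fun d hd hd0 => ?_
    have hdj : d j = w := (mem_filter.1 hd).2
    rcases hchain c d hc hd0 with hcd | hdc
    · refine mem_erase.2 ⟨fun h => hcj (h ▸ hdj), mem_filter.2 ⟨mem_univ d, ?_⟩⟩
      rcases hcd i with h | h
      · rw [← h, hci]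
      · exact absurd (h.symm.trans hci) hv.symm
    · rcases hdc j with h | h
      · exact (hcj (h.symm.trans hdj)).elim
      · exact absurd (hdj.symm.trans h) hw
  have hsplit :=
    add_sum_erase (univ.filter (fun d => d i = v)) lam (mem_filter.2 ⟨mem_univ c, hci⟩)
  have hpos : 0 < lam c := (h0 c).lt_of_ne' hc
  unfold coordMass at hle hsub
  linarith

theorem sum_filter_le_eq_coordMass (h0 : ∀ c, 0 ≤ lam c) (hchain : ChainSupp n lam)
    {c : Fin n → D3} {i : Fin n} (hi : c i ≠ .zero)
    (hmin : ∀ j, c j ≠ .zero → coordMass lam i (c i) ≤ coordMass lam j (c j)) :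
    ∑ d ∈ univ.filter (c ≤ ·), lam d = coordMass lam i (c i) := by
  refine le_antisymm (sum_le_sum_of_ne_zero_of_nonneg h0 fun d hd _ => ?_)
    (sum_le_sum_of_ne_zero_of_nonneg h0 fun d hd hd0 => ?_)
  · refine mem_filter.2 ⟨mem_univ d, ((mem_filter.1 hd).2 i).resolve_right hi ▸ rfl⟩
  · refine mem_filter.2 ⟨mem_univ d, fun j => ?_⟩
    by_cases hj : c j = .zero
    · exact Or.inr hj
    · exact Or.inl (apply_eq_of_coordMass_le h0 hchain hi hj (hmin j hj) hd0
        (mem_filter.1 hd).2).symm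

/-- On both measures the up-set is cut out by the same lightest coordinate condition. -/
theorem sum_filter_le_eq_of_coordMass_eq (hl0 : ∀ c, 0 ≤ lam c) (hμ0 : ∀ c, 0 ≤ μ c)
    (hlc : ChainSupp n lam) (hμc : ChainSupp n μ) (htot : ∑ c, lam c = ∑ c, μ c)
    (hM : ∀ i v, v ≠ .zero → coordMass lam i v = coordMass μ i v) (c : Fin n → D3) :
    ∑ d ∈ univ.filter (c ≤ ·), lam d = ∑ d ∈ univ.filter (c ≤ ·), μ d := by
  by_cases hc : ∃ i, c i ≠ .zero
  · obtain ⟨i, hi, hmin⟩ := (univ.filter (c · ≠ .zero)).exists_min_image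
      (fun j => coordMass lam j (c j)) (by simpa [Finset.Nonempty] using hc)
    have hi : c i ≠ .zero := (mem_filter.1 hi).2
    have hmin : ∀ j, c j ≠ .zero → coordMass lam i (c i) ≤ coordMass lam j (c j) :=
      fun j hj => hmin j (mem_filter.2 ⟨mem_univ j, hj⟩)
    rw [sum_filter_le_eq_coordMass hl0 hlc hi hmin, sum_filter_le_eq_coordMass hμ0 hμc hi
      fun j hj => by simpa only [← hM _ _ hi, ← hM _ _ hj] using hmin j hj, hM _ _ hi]
  · push Not at hc
    have hbot : ∀ d, c ≤ d := fun d i => Or.inr (hc i)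
    simpa [hbot] using htot

theorem eq_of_coordMass_eq (hl0 : ∀ c, 0 ≤ lam c) (hμ0 : ∀ c, 0 ≤ μ c)
    (hlc : ChainSupp n lam) (hμc : ChainSupp n μ) (htot : ∑ c, lam c = ∑ c, μ c)
    (hM : ∀ i v, v ≠ .zero → coordMass lam i v = coordMass μ i v) : lam = μ := by
  funext c
  induction hk : zc c using Nat.strong_induction_on generalizing c with
  | _ k ih =>
    have hup := sum_filter_le_eq_of_coordMass_eq hl0 hμ0 hlc hμc htot hM c
    have hc : c ∈ univ.filter (c ≤ ·) := mem_filter.2 ⟨mem_univ c, le_rfl⟩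
    rw [← add_sum_erase _ _ hc, ← add_sum_erase _ _ hc] at hup
    have habove : ∑ d ∈ (univ.filter (c ≤ ·)).erase c, lam d
        = ∑ d ∈ (univ.filter (c ≤ ·)).erase c, μ d := by
      refine sum_congr rfl fun d hd => ?_
      have hcd : c < d := lt_of_le_of_ne (mem_filter.1 (mem_of_mem_erase hd)).2
        (ne_of_mem_erase hd).symm
      exact ih _ (hk ▸ zc_lt_zc_of_lt hcd) d rfl
    linarith

end ChainSupported

section Marginal

variable {α : ℝ} {n : ℕ} {lam μ : (Fin n → D3) → ℝ} {x : Fin n → ℝ}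

theorem coordMass_one_sub_mul_coordMass_neg (hm : HasMarginal α n lam x) (i : Fin n) :
    coordMass lam i .one - α * coordMass lam i .neg = x i := by
  rw [← hm i, coordMass, coordMass, sum_filter, sum_filter, mul_sum, ← sum_sub_distrib]
  refine sum_congr rfl fun c _ => ?_
  cases c i <;> simp [D3.emb, mul_comm]

theorem coordMass_one_eq_zero_or_coordMass_neg_eq_zero (hchain : ChainSupp n lam) (i : Fin n) :
    coordMass lam i .one = 0 ∨ coordMass lam i .neg = 0 := by
  by_contra! h
  obtain ⟨c, hc, hc0⟩ := exists_ne_zero_of_sum_ne_zero h.1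
  obtain ⟨d, hd, hd0⟩ := exists_ne_zero_of_sum_ne_zero h.2
  rw [mem_filter] at hc hd
  rcases hchain c d hc0 hd0 with hcd | hdc
  · rcases hcd i with h | h <;> simp [hc.2, hd.2] at h
  · rcases hdc i with h | h <;> simp [hc.2, hd.2] at h

theorem coordMass_eq_of_hasMarginal (hα : 0 < α) (h0 : ∀ c, 0 ≤ lam c)
    (hchain : ChainSupp n lam) (hm : HasMarginal α n lam x) (i : Fin n) :
    coordMass lam i .one = max (x i) 0 ∧ coordMass lam i .neg = max (-x i) 0 / α := by
  have hone : 0 ≤ coordMass lam i .one := sum_nonneg fun c _ => h0 c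
  have hneg : 0 ≤ coordMass lam i .neg := sum_nonneg fun c _ => h0 c
  have hx := coordMass_one_sub_mul_coordMass_neg hm i
  rcases coordMass_one_eq_zero_or_coordMass_neg_eq_zero hchain i with h | h
  · have hαneg : 0 ≤ α * coordMass lam i .neg := mul_nonneg hα.le hneg
    rw [← hx, h, zero_sub, max_eq_right (neg_nonpos.2 hαneg), neg_neg, max_eq_left hαneg,
      mul_div_cancel_left₀ _ hα.ne']
    exact ⟨rfl, rfl⟩
  · rw [← hx, h, mul_zero, sub_zero, max_eq_left hone, max_eq_right (neg_nonpos.2 hone),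
      zero_div]
    exact ⟨rfl, rfl⟩

theorem eq_of_hasMarginal (hα : 0 < α) (hl0 : ∀ c, 0 ≤ lam c) (hμ0 : ∀ c, 0 ≤ μ c)
    (hlc : ChainSupp n lam) (hμc : ChainSupp n μ) (htot : ∑ c, lam c = ∑ c, μ c)
    (hlm : HasMarginal α n lam x) (hμm : HasMarginal α n μ x) : lam = μ := by
  refine eq_of_coordMass_eq hl0 hμ0 hlc hμc htot fun i v hv => ?_
  have hl := coordMass_eq_of_hasMarginal hα hl0 hlc hlm i
  have hμ := coordMass_eq_of_hasMarginal hα hμ0 hμc hμm i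
  cases v
  · rw [hl.2, hμ.2]
  · exact absurd rfl hv
  · rw [hl.1, hμ.1]

end Marginal

section ThreePoint

variable {α : ℝ} {n : ℕ}

noncomputable def threePoint (α : ℝ) (a b : Fin n → D3) : (Fin n → D3) → ℝ := fun c =>
  (if c = vmeet0 a b then (1 : ℝ) / 2 else 0) + (if c = vjoin0 a b then α / 2 else 0)
    + (if c = vjoin1 a b then (1 - α) / 2 else 0)

theorem sum_threePoint_mul (a b : Fin n → D3) (g : (Fin n → D3) → ℝ) :
    ∑ c, threePoint α a b c * g c
      = 1 / 2 * g (vmeet0 a b) + α / 2 * g (vjoin0 a b) + (1 - α) / 2 * g (vjoin1 a b) := by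
  simp only [threePoint, add_mul, ite_mul, zero_mul, sum_add_distrib, sum_ite_eq', mem_univ,
    if_true]

theorem sum_threePoint (a b : Fin n → D3) : ∑ c, threePoint α a b c = 1 := by
  have h := sum_threePoint_mul (α := α) a b fun _ => 1
  simp only [mul_one] at h
  rw [h]
  ring

theorem threePoint_nonneg (hα : α ∈ Set.Icc (0 : ℝ) 1) (a b : Fin n → D3) (c : Fin n → D3) :
    0 ≤ threePoint α a b c := by
  obtain ⟨h0, h1⟩ := hα
  unfold threePoint
  split_ifs <;> linarith

theorem hasMarginal_threePoint (a b : Fin n → D3) :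
    HasMarginal α n (threePoint α a b) (fun i => (D3.emb α (a i) + D3.emb α (b i)) / 2) :=
  fun i => (sum_threePoint_mul a b fun c => D3.emb α (c i)).trans
    (D3.emb_meet0_add_emb_join0_add_emb_join1 α (a i) (b i))

end ThreePoint

/-- the three-point distribution has marginal `(a+b)/2`; if the three
points form a chain, `f^L((a+b)/2)` is the corresponding combination. -/
theorem stmt9 (α : ℝ) (hα : α ∈ Set.Ioc (0 : ℝ) 1) (n : ℕ) (f : (Fin n → D3) → ℝ)
    (a b : Fin n → D3) :
    HasMarginal α n
      (fun c => (if c = vmeet0 a b then (1 : ℝ) / 2 else 0)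
        + (if c = vjoin0 a b then α / 2 else 0)
        + (if c = vjoin1 a b then (1 - α) / 2 else 0))
      (fun i => (D3.emb α (a i) + D3.emb α (b i)) / 2) ∧
    (ChainSupp n
        (fun c => (if c = vmeet0 a b then (1 : ℝ) / 2 else 0)
          + (if c = vjoin0 a b then α / 2 else 0)
          + (if c = vjoin1 a b then (1 - α) / 2 else 0)) →
      ∀ lam : (Fin n → D3) → ℝ, IsDist n lam →
        HasMarginal α n lam (fun i => (D3.emb α (a i) + D3.emb α (b i)) / 2) →
        ChainSupp n lam →
        ∑ c : Fin n → D3, lam c * f c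
          = (1 / 2) * f (vmeet0 a b) + (α / 2) * f (vjoin0 a b)
            + ((1 - α) / 2) * f (vjoin1 a b)) := by
  refine ⟨hasMarginal_threePoint a b, fun hchain lam hd hm hlc => ?_⟩
  have hlam : lam = threePoint α a b :=
    eq_of_hasMarginal hα.1 (fun c => (hd.1 c).1)
      (threePoint_nonneg (Set.Ioc_subset_Icc_self hα) a b) hlc hchain
      (hd.2.trans (sum_threePoint a b).symm) hm (hasMarginal_threePoint a b)
  rw [hlam, sum_threePoint_mul]
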